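/- Define the 3D AMIPS distortion on the positive orthant of ℝ³ by f(σ₁,σ₂,σ₃) = (1/16)·∏ᵢ₌₁³ (σᵢ/σᵢ₊₁ + σᵢ₊₁/σᵢ) + (1/2)·(σ₁σ₂σ₃ + 1/(σ₁σ₂σ₃)) (cyclic indices), and its symmetrization f^Sym(σ) = (1/2)·f(σ) + (1/2)·(σ₁σ₂σ₃)·f(1/σ₁,1/σ₂,1/σ₃). Then for every t > 0, f^Sym(t,t,t) = (1/4)·(1 + t³)·(1 + t³ + t⁻³); in particular f^Sym(1,1,1) = 3/2 while f^Sym(4/5, 4/5, 4/5) = 5239269/4000000 < 3/2. Hence (1,1,1) is not a minimizer of f^Sym over the positive orthant, so the symmetrized AMIPS energy does not favor isometry. -/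

import Mathlib

/-- The 3D AMIPS distortion in singular values (cyclic indices). -/
noncomputable def fAMIPS (a b c : ℝ) : ℝ :=
  (1/16) * ((a / b + b / a) * (b / c + c / b) * (c / a + a / c)) +
  (1/2) * (a * b * c + (a * b * c)⁻¹)

/-- The symmetrized 3D AMIPS distortion. -/
noncomputable def fSymAMIPS (a b c : ℝ) : ℝ :=
  (1/2) * fAMIPS a b c + (1/2) * (a * b * c) * fAMIPS a⁻¹ b⁻¹ c⁻¹

/-! On the diagonal every ratio `σᵢ/σⱼ` is `1`, so with `s = t³` the symmetrized energy is
`(1 + s)(1 + s + 1/s)/4`. Its derivative in `s` at `s = 1` is `3/4 ≠ 0`, so `(1,1,1)` is not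
even a critical point; `t = 4/5` is an explicit point of lower energy. -/

theorem fAMIPS_diag {t : ℝ} (ht : t ≠ 0) :
    fAMIPS t t t = 1/2 + (1/2) * (t^3 + (t^3)⁻¹) := by
  simp only [fAMIPS, div_self ht]
  ring

theorem fSymAMIPS_diag {t : ℝ} (ht : t ≠ 0) :
    fSymAMIPS t t t = (1/4) * (1 + t^3) * (1 + t^3 + (t^3)⁻¹) := by
  rw [fSymAMIPS, fAMIPS_diag ht, fAMIPS_diag (inv_ne_zero ht)]
  field_simp
  ring

/-- On the diagonal
`f^Sym(t,t,t) = (1/4)(1 + t³)(1 + t³ + t⁻³)`; in particular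
`f^Sym(1,1,1) = 3/2` while `f^Sym(4/5,4/5,4/5) = 5239269/4000000 < 3/2`, so
`(1,1,1)` is not a minimizer: the symmetrized AMIPS energy does not favor
isometry. -/
theorem statement_12 :
    (∀ t : ℝ, 0 < t → fSymAMIPS t t t = (1/4) * (1 + t^3) * (1 + t^3 + (t^3)⁻¹)) ∧
    fSymAMIPS 1 1 1 = 3/2 ∧
    fSymAMIPS (4/5) (4/5) (4/5) = 5239269/4000000 ∧
    (5239269/4000000 : ℝ) < 3/2 ∧
    (∃ a b c : ℝ, 0 < a ∧ 0 < b ∧ 0 < c ∧ fSymAMIPS a b c < fSymAMIPS 1 1 1) := by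
  have at_one : fSymAMIPS 1 1 1 = 3/2 := by
    rw [fSymAMIPS_diag one_ne_zero]; norm_num
  have at_four_fifths : fSymAMIPS (4/5) (4/5) (4/5) = 5239269/4000000 := by
    rw [fSymAMIPS_diag (by norm_num)]; norm_num
  have value_lt : (5239269/4000000 : ℝ) < 3/2 := by norm_num
  refine ⟨fun t ht => fSymAMIPS_diag ht.ne', at_one, at_four_fifths, value_lt,
    4/5, 4/5, 4/5, by norm_num, by norm_num, by norm_num, ?_⟩
  rw [at_one, at_four_fifths]
  exact value_lt
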